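/- Let J₂ be a real m×n matrix with full row rank, C a symmetric positive definite n×n real matrix, J₁ ∈ ℝⁿ, F₂ ∈ ℝᵐ, and α ∈ (0,1). Let Δx^{SQP} := −(Iₙ − T^C J₂) C⁻¹ J₁ − T^C F₂ and Δx^f := −( (1/(1−α)) T₂ − (α/(1−α)) T^C ) F₂. Then the interpolated direction satisfies the identity α Δx^{SQP} + (1−α) Δx^f = −α (Iₙ − T^C J₂) C⁻¹ J₁ − T₂ F₂, and this interpolated direction Δx satisfies the linearized constraint J₂ Δx + F₂ = 0 (derivation of update (19) and feasibility relation (21)). -/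

import Mathlib

open Matrix

/-- `T^C := C⁻¹ J₂ᵀ (J₂ C⁻¹ J₂ᵀ)⁻¹`. -/
noncomputable def TCmat {m n : ℕ} (J₂ : Matrix (Fin m) (Fin n) ℝ)
    (C : Matrix (Fin n) (Fin n) ℝ) : Matrix (Fin n) (Fin m) ℝ :=
  C⁻¹ * J₂ᵀ * (J₂ * C⁻¹ * J₂ᵀ)⁻¹

/-- Moore–Penrose generalized right inverse `T₂ := J₂ᵀ (J₂ J₂ᵀ)⁻¹`. -/
noncomputable def T2 {m n : ℕ} (J₂ : Matrix (Fin m) (Fin n) ℝ) :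
    Matrix (Fin n) (Fin m) ℝ :=
  J₂ᵀ * (J₂ * J₂ᵀ)⁻¹

/-!
The identity is pure linear algebra once `α ≠ 1`: the `T^C F₂` contributions of the two
directions cancel. For feasibility, `J₂ T^C = 1` puts the range of `(1 - T^C J₂) C⁻¹` inside
`ker J₂`, and `J₂ T₂ = 1` makes `J₂ (T₂ F₂) = F₂`. Both right-inverse identities come from
`J B Jᵀ` being positive definite for `B` positive definite and `J` of full row rank.
-/

namespace Matrix

variable {m n : Type*} [Fintype m] [Fintype n] [DecidableEq m]

theorem vecMul_injective_of_mulVec_surjective {R : Type*} [CommRing R] {J : Matrix m n R}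
    (hJ : Function.Surjective J.mulVec) : Function.Injective J.vecMul := by
  obtain ⟨B, hJB⟩ := mulVec_surjective_iff_exists_right_inverse.mp hJ
  intro x y hxy
  simpa [vecMul_vecMul, hJB] using congrArg (· ᵥ* B) hxy

theorem PosDef.mul_mul_transpose_of_mulVec_surjective {B : Matrix n n ℝ} (hB : B.PosDef)
    {J : Matrix m n ℝ} (hJ : Function.Surjective J.mulVec) : (J * B * Jᵀ).PosDef := by
  simpa [conjTranspose_eq_transpose_of_trivial] using
    hB.mul_mul_conjTranspose_same (vecMul_injective_of_mulVec_surjective hJ)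

theorem mul_weighted_rightInverse_eq_one {B : Matrix n n ℝ} (hB : B.PosDef)
    {J : Matrix m n ℝ} (hJ : Function.Surjective J.mulVec) :
    J * (B * Jᵀ * (J * B * Jᵀ)⁻¹) = 1 := by
  rw [← Matrix.mul_assoc, ← Matrix.mul_assoc, mul_nonsing_inv]
  exact (isUnit_iff_isUnit_det _).mp (hB.mul_mul_transpose_of_mulVec_surjective hJ).isUnit

theorem mul_one_sub_mul_mul_eq_zero {R l : Type*} [CommRing R] [Fintype l] [DecidableEq n]
    {J : Matrix m n R} {T : Matrix n m R} (hJT : J * T = 1) (X : Matrix n l R) :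
    J * ((1 - T * J) * X) = 0 := by
  rw [← Matrix.mul_assoc, Matrix.mul_sub, Matrix.mul_one, ← Matrix.mul_assoc, hJT,
    Matrix.one_mul, sub_self, Matrix.zero_mul]

end Matrix

theorem mul_TCmat {m n : ℕ} {J₂ : Matrix (Fin m) (Fin n) ℝ}
    (hJ₂ : Function.Surjective J₂.mulVec) {C : Matrix (Fin n) (Fin n) ℝ} (hC : C.PosDef) :
    J₂ * TCmat J₂ C = 1 := by
  rw [TCmat]
  exact mul_weighted_rightInverse_eq_one hC.inv hJ₂

theorem mul_T2 {m n : ℕ} {J₂ : Matrix (Fin m) (Fin n) ℝ}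
    (hJ₂ : Function.Surjective J₂.mulVec) : J₂ * T2 J₂ = 1 := by
  simpa [T2] using mul_weighted_rightInverse_eq_one PosDef.one hJ₂

theorem smul_add_one_sub_smul_interpolate {V : Type*} [AddCommGroup V] [Module ℝ V] {α : ℝ}
    (hα : α ≠ 1) (p b c : V) :
    α • (-p - c) + (1 - α) • -((1 / (1 - α)) • b - (α / (1 - α)) • c) = -(α • p) - b := by
  have hα' : 1 - α ≠ 0 := sub_ne_zero.mpr hα.symm
  simp only [smul_neg, smul_sub, smul_smul, mul_one_div_cancel hα', mul_div_cancel₀ _ hα']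
  module

theorem interpolated_direction_identity_and_feasibility {n m : ℕ}
    (J₂ : Matrix (Fin m) (Fin n) ℝ) (hJ₂ : Function.Surjective J₂.mulVec)
    (C : Matrix (Fin n) (Fin n) ℝ) (hC : C.PosDef)
    (J₁ : Fin n → ℝ) (F₂ : Fin m → ℝ) (α : ℝ) (hα : α ∈ Set.Ioo (0 : ℝ) 1)
    (ΔxSQP : Fin n → ℝ)
    (hΔxSQP : ΔxSQP = -(((1 - TCmat J₂ C * J₂) * C⁻¹).mulVec J₁) - (TCmat J₂ C).mulVec F₂)
    (Δxf : Fin n → ℝ)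
    (hΔxf : Δxf = -(((1 / (1 - α)) • T2 J₂ - (α / (1 - α)) • TCmat J₂ C).mulVec F₂))
    (Δx : Fin n → ℝ) (hΔx : Δx = α • ΔxSQP + (1 - α) • Δxf) :
    Δx = -(α • (((1 - TCmat J₂ C * J₂) * C⁻¹).mulVec J₁)) - (T2 J₂).mulVec F₂ ∧
    J₂.mulVec Δx + F₂ = 0 := by
  have hid : Δx = -(α • (((1 - TCmat J₂ C * J₂) * C⁻¹).mulVec J₁)) - (T2 J₂).mulVec F₂ := by
    rw [hΔx, hΔxSQP, hΔxf, sub_mulVec, smul_mulVec, smul_mulVec]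
    exact smul_add_one_sub_smul_interpolate hα.2.ne _ _ _
  refine ⟨hid, ?_⟩
  rw [hid, mulVec_sub, mulVec_neg, mulVec_smul, mulVec_mulVec, mulVec_mulVec,
    mul_one_sub_mul_mul_eq_zero (mul_TCmat hJ₂ hC), mul_T2 hJ₂]
  simp
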